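/- For a cd-word w of degree n, the element Θ_w = Σ_{S ∈ b[I^w]} 2^{|S|+1} M_S expressed in the basis F_T = Σ_{R ⊇ T} M_R equals 2^{|w|_d + 1} Σ_{T : T, [n]\T ∈ b[I^w]} F_T, where |w|_d is the number of d's in w. -/

import Mathlib

/-!
Comparing coefficients of `M_R` for `R ⊆ [n]`, the claim is that `2 ^ (|w|_d + 1)` times the
number of `T ⊆ R` with `T, [n] \ T ∈ b[I^w]` is `2 ^ (|R| + 1)` if `R ∈ b[I^w]` and `0` otherwise.
Since the pairs `{i - 1, i}`, `i ∈ S_w`, lie in `[n]`, these `T` are exactly the subsets of `R`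
meeting every pair in one point. Consecutive elements of `S_w` differ by at least 2, so the pairs
are disjoint and `T` is chosen independently on each pair, in `c = |R ∩ {i - 1, i}|` ways, and
freely off the pairs. As `c ∈ {1, 2}`, the factor `2` per pair turns `c` into `2 ^ c = 2 c`.
-/

/-- The degree of a cd-word (`false` = c, degree 1; `true` = d, degree 2). -/
def degw (w : List Bool) : ℕ := (w.map (fun b => if b then 2 else 1)).sum

/-- The left sparse set `S_w` of a cd-word: degrees of prefixes ending at each d. -/
def Sw (w : List Bool) : Finset ℕ :=
  ((Finset.range w.length).filter (fun j => w.getD j false = true)).image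
    (fun j => degw (w.take (j + 1)))

/-- `T ∈ b[I^w]`: `T` meets every interval `{i-1, i}` with `i ∈ S_w`. -/
def blocks (w : List Bool) (T : Finset ℕ) : Prop := ∀ i ∈ Sw w, i - 1 ∈ T ∨ i ∈ T

instance (w : List Bool) (T : Finset ℕ) : Decidable (blocks w T) := by
  unfold blocks; infer_instance

/-- The monomial basis element `M_S`. -/
noncomputable def MM (S : Finset ℕ) : Finset ℕ →₀ ℚ := Finsupp.single S 1

/-- `F_T = Σ_{R ⊇ T, R ⊆ [n]} M_R`. -/
noncomputable def FF (n : ℕ) (T : Finset ℕ) : Finset ℕ →₀ ℚ :=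
  ∑ R ∈ (Finset.Icc 1 n).powerset.filter (fun R => T ⊆ R), MM R

open Finset

section PowersetCount

variable {α ι : Type*} [DecidableEq α]

theorem card_filter_powerset_union_of_disjoint {s t : Finset α} (hst : Disjoint s t)
    (p q : Finset α → Prop) [DecidablePred p] [DecidablePred q] :
    #{T ∈ (s ∪ t).powerset | p (T ∩ s) ∧ q (T ∩ t)} =
      #{U ∈ s.powerset | p U} * #{V ∈ t.powerset | q V} := by
  have hinter : ∀ {U V}, U ⊆ s → V ⊆ t → (U ∪ V) ∩ s = U ∧ (U ∪ V) ∩ t = V := fun hU hV => by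
    rw [union_inter_distrib_right, union_inter_distrib_right, inter_eq_left.2 hU,
      inter_eq_left.2 hV, disjoint_iff_inter_eq_empty.1 (hst.mono_left hU),
      disjoint_iff_inter_eq_empty.1 (hst.symm.mono_left hV), union_empty, empty_union]
    exact ⟨rfl, rfl⟩
  rw [← card_product]
  refine card_nbij' (fun T => (T ∩ s, T ∩ t)) (fun x => x.1 ∪ x.2) ?_ ?_ ?_ ?_
  · intro T hT
    simp only [mem_coe, mem_filter, mem_powerset] at hT
    simp [hT.2, inter_subset_right]
  · rintro ⟨U, V⟩ hUV
    simp only [mem_coe, mem_product, mem_filter, mem_powerset] at hUV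
    obtain ⟨⟨hUs, hU⟩, hVt, hV⟩ := hUV
    simp only [mem_coe, mem_filter, mem_powerset, hinter hUs hVt]
    exact ⟨union_subset_union hUs hVt, hU, hV⟩
  · intro T hT
    simp only [mem_coe, mem_filter, mem_powerset] at hT
    simp [← inter_union_distrib_left, inter_eq_left.2 hT.1]
  · rintro ⟨U, V⟩ hUV
    simp only [mem_coe, mem_product, mem_filter, mem_powerset] at hUV
    exact Prod.ext (hinter hUV.1.1 hUV.2.1).1 (hinter hUV.1.1 hUV.2.1).2

omit [DecidableEq α] in
theorem card_filter_powerset_card_eq_one (s : Finset α) : #{U ∈ s.powerset | #U = 1} = #s := by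
  rw [← powersetCard_eq_filter, card_powersetCard, Nat.choose_one_right]

theorem card_inter_pair_eq_one_iff {a b : α} (hab : a ≠ b) (T : Finset α) :
    #(T ∩ {a, b}) = 1 ↔ (a ∈ T ∨ b ∈ T) ∧ ¬(a ∈ T ∧ b ∈ T) := by
  by_cases ha : a ∈ T <;> by_cases hb : b ∈ T <;>
    simp [inter_insert_of_mem, inter_insert_of_notMem, inter_singleton_of_mem,
      inter_singleton_of_notMem, ha, hb, hab]

theorem two_mul_eq_two_pow {c : ℕ} (h₁ : 1 ≤ c) (h₂ : c ≤ 2) : 2 * c = 2 ^ c := by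
  interval_cases c <;> rfl

theorem card_filter_powerset_inter_card_eq_one_mul_two_pow {I : Finset ι} {p : ι → Finset α}
    (hp : ∀ i ∈ I, #(p i) ≤ 2) (hdisj : (I : Set ι).PairwiseDisjoint p) {S : Finset α}
    (hS : ∀ i ∈ I, (S ∩ p i).Nonempty) :
    #{T ∈ S.powerset | ∀ i ∈ I, #(T ∩ p i) = 1} * 2 ^ #I = 2 ^ #S := by
  classical
  induction I using Finset.induction_on generalizing S with
  | empty => simp
  | @insert a I ha ih =>
    set s := S ∩ p a
    set t := S \ p a
    have hdisj_a : ∀ i ∈ I, Disjoint (p a) (p i) := fun i hi =>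
      hdisj (mem_insert_self a I) (mem_insert_of_mem hi) (ne_of_mem_of_not_mem hi ha).symm
    have ht : ∀ i ∈ I, t ∩ p i = S ∩ p i := fun i hi => by
      rw [sdiff_inter_right_comm, sdiff_eq_self_of_disjoint
        ((hdisj_a i hi).symm.mono_left inter_subset_right)]
    have hsplit : {T ∈ S.powerset | ∀ i ∈ insert a I, #(T ∩ p i) = 1} =
        {T ∈ (s ∪ t).powerset | #(T ∩ s) = 1 ∧ ∀ i ∈ I, #(T ∩ t ∩ p i) = 1} := by
      rw [union_comm, sdiff_union_inter]
      refine filter_congr fun T hT => ?_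
      rw [mem_powerset] at hT
      have hTs : T ∩ s = T ∩ p a := by rw [← inter_assoc, inter_eq_left.2 hT]
      have hTt : ∀ i ∈ I, T ∩ t ∩ p i = T ∩ p i := fun i hi => by
        rw [inter_assoc, ht i hi, ← inter_assoc, inter_eq_left.2 hT]
      rw [forall_mem_insert, hTs]
      exact and_congr_right fun _ => forall₂_congr fun i hi => by rw [hTt i hi]
    have hs : 1 ≤ #s ∧ #s ≤ 2 :=
      ⟨card_pos.2 (hS a (mem_insert_self a I)),
        (card_le_card inter_subset_right).trans (hp a (mem_insert_self a I))⟩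
    have hIH := ih (fun i hi => hp i (mem_insert_of_mem hi))
      (hdisj.subset (by simp)) (S := t) fun i hi => by
        rw [ht i hi]; exact hS i (mem_insert_of_mem hi)
    rw [hsplit, card_filter_powerset_union_of_disjoint (disjoint_sdiff_inter S (p a)).symm
      (fun U => #U = 1) (fun V => ∀ i ∈ I, #(V ∩ p i) = 1),
      card_filter_powerset_card_eq_one, card_insert_of_notMem ha,
      ← card_inter_add_card_sdiff S (p a)]
    calc #s * #{V ∈ t.powerset | ∀ i ∈ I, #(V ∩ p i) = 1} * 2 ^ (#I + 1)
        = (2 * #s) * (#{V ∈ t.powerset | ∀ i ∈ I, #(V ∩ p i) = 1} * 2 ^ #I) := by ring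
      _ = 2 ^ (#s + #t) := by rw [two_mul_eq_two_pow hs.1 hs.2, hIH, pow_add]

theorem card_filter_powerset_inter_card_eq_one_eq_zero {I : Finset ι} {p : ι → Finset α}
    {S : Finset α} {i : ι} (hi : i ∈ I) (hS : S ∩ p i = ∅) :
    #{T ∈ S.powerset | ∀ i ∈ I, #(T ∩ p i) = 1} = 0 := by
  rw [card_eq_zero, filter_eq_empty_iff]
  intro T hT hT1
  have := card_le_card (inter_subset_inter_right (mem_powerset.1 hT) : T ∩ p i ⊆ S ∩ p i)
  rw [hS, hT1 i hi] at this
  simp at this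

end PowersetCount

theorem degw_append (u v : List Bool) : degw (u ++ v) = degw u + degw v := by
  simp [degw]

theorem degw_take_le (w : List Bool) (j : ℕ) : degw (w.take j) ≤ degw w := by
  conv_rhs => rw [← List.take_append_drop j w]
  rw [degw_append]
  exact Nat.le_add_right _ _

theorem degw_take_mono (w : List Bool) {a b : ℕ} (hab : a ≤ b) :
    degw (w.take a) ≤ degw (w.take b) := by
  rw [← min_eq_left hab, ← List.take_take]
  exact degw_take_le _ _

theorem degw_take_succ {w : List Bool} {j : ℕ} (hj : j < w.length) :
    degw (w.take (j + 1)) = degw (w.take j) + if w[j] then 2 else 1 := by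
  rw [List.take_add_one, List.getElem?_eq_getElem hj, degw_append]
  simp [degw]

theorem degw_take_succ_lt_of_lt {w : List Bool} {a b : ℕ} (hab : a < b) (hb : b < w.length) :
    degw (w.take (a + 1)) < degw (w.take (b + 1)) := by
  have := degw_take_succ hb
  have := degw_take_mono w (show a + 1 ≤ b from hab)
  split_ifs at * <;> omega

theorem mem_Sw {w : List Bool} {i : ℕ} :
    i ∈ Sw w ↔ ∃ (j : ℕ) (hj : j < w.length), w[j] = true ∧ degw (w.take (j + 1)) = i := by
  simp only [Sw, mem_image, mem_filter, mem_range]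
  constructor
  · rintro ⟨j, ⟨hj, hd⟩, rfl⟩
    exact ⟨j, hj, by rwa [List.getD_eq_getElem _ _ hj] at hd, rfl⟩
  · rintro ⟨j, hj, hd, rfl⟩
    exact ⟨j, ⟨hj, by rwa [List.getD_eq_getElem _ _ hj]⟩, rfl⟩

theorem two_le_of_mem_Sw {w : List Bool} {i : ℕ} (hi : i ∈ Sw w) : 2 ≤ i := by
  obtain ⟨j, hj, hd, rfl⟩ := mem_Sw.1 hi
  rw [degw_take_succ hj, if_pos hd]
  exact Nat.le_add_left _ _

theorem le_degw_of_mem_Sw {w : List Bool} {i : ℕ} (hi : i ∈ Sw w) : i ≤ degw w := by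
  obtain ⟨j, -, -, rfl⟩ := mem_Sw.1 hi
  exact degw_take_le _ _

theorem add_one_lt_of_mem_Sw {w : List Bool} {i i' : ℕ} (hi : i ∈ Sw w) (hi' : i' ∈ Sw w)
    (hlt : i < i') : i + 1 < i' := by
  obtain ⟨a, ha, -, rfl⟩ := mem_Sw.1 hi
  obtain ⟨b, hb, hdb, rfl⟩ := mem_Sw.1 hi'
  have hab : a < b := by
    by_contra! hba
    exact hlt.not_ge (degw_take_mono w (Nat.succ_le_succ hba))
  have := degw_take_mono w (show a + 1 ≤ b from hab)
  rw [degw_take_succ hb, if_pos hdb]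
  omega

theorem card_filter_range_getD_eq_count (w : List Bool) :
    #{j ∈ range w.length | w.getD j false = true} = w.count true := by
  induction w with
  | nil => rfl
  | cons b w ih =>
    rw [card_filter, List.length_cons, sum_range_succ'] at *
    simp only [List.getD_cons_succ, List.getD_cons_zero, List.count_cons, ih, beq_iff_eq]

theorem card_Sw (w : List Bool) : #(Sw w) = w.count true := by
  rw [Sw, card_image_of_injOn, card_filter_range_getD_eq_count]
  intro a ha b hb hab
  simp only [mem_coe, mem_filter, mem_range] at ha hb
  by_contra! hne
  rcases hne.lt_or_gt with h | h
  · exact (degw_take_succ_lt_of_lt h hb.1).ne hab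
  · exact (degw_take_succ_lt_of_lt h ha.1).ne hab.symm

theorem blocks_iff_inter_nonempty {w : List Bool} {T : Finset ℕ} :
    blocks w T ↔ ∀ i ∈ Sw w, (T ∩ {i - 1, i}).Nonempty := by
  simp [blocks, Finset.Nonempty, and_or_left, exists_or]

theorem blocks_and_blocks_sdiff_iff {w : List Bool} {T : Finset ℕ} :
    blocks w T ∧ blocks w (Icc 1 (degw w) \ T) ↔ ∀ i ∈ Sw w, #(T ∩ {i - 1, i}) = 1 := by
  simp only [blocks, ← forall₂_and]
  refine forall₂_congr fun i hi => ?_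
  have h₂ := two_le_of_mem_Sw hi
  have hn := le_degw_of_mem_Sw hi
  rw [card_inter_pair_eq_one_iff (by omega)]
  simp only [mem_sdiff, mem_Icc, show 1 ≤ i - 1 ∧ i - 1 ≤ degw w by omega,
    show 1 ≤ i ∧ i ≤ degw w by omega, true_and]
  tauto

theorem filter_blocks_and_blocks_sdiff_subset (w : List Bool) {R : Finset ℕ}
    (hR : R ⊆ Icc 1 (degw w)) :
    {T ∈ (Icc 1 (degw w)).powerset.filter
        (fun T => blocks w T ∧ blocks w (Icc 1 (degw w) \ T)) | T ⊆ R} =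
      {T ∈ R.powerset | ∀ i ∈ Sw w, #(T ∩ {i - 1, i}) = 1} := by
  ext T
  simp only [mem_filter, mem_powerset, blocks_and_blocks_sdiff_iff]
  exact ⟨fun ⟨⟨_, hT⟩, hTR⟩ => ⟨hTR, hT⟩, fun ⟨hTR, hT⟩ => ⟨⟨hTR.trans hR, hT⟩, hTR⟩⟩

theorem pairwiseDisjoint_Sw (w : List Bool) :
    (Sw w : Set ℕ).PairwiseDisjoint fun i => ({i - 1, i} : Finset ℕ) := by
  intro i hi i' hi' hne
  simp only [Function.onFun, disjoint_insert_left, disjoint_insert_right, disjoint_singleton,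
    mem_insert, mem_singleton]
  rcases hne.lt_or_gt with h | h
  · have := add_one_lt_of_mem_Sw hi hi' h
    omega
  · have := add_one_lt_of_mem_Sw hi' hi h
    omega

theorem two_pow_mul_card_filter_blocks_and_blocks_sdiff_subset (w : List Bool) {R : Finset ℕ}
    (hR : R ⊆ Icc 1 (degw w)) :
    2 ^ (w.count true + 1) * #{T ∈ (Icc 1 (degw w)).powerset.filter
        (fun T => blocks w T ∧ blocks w (Icc 1 (degw w) \ T)) | T ⊆ R} =
      if blocks w R then 2 ^ (#R + 1) else 0 := by
  rw [filter_blocks_and_blocks_sdiff_subset w hR]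
  split_ifs with hblocks <;> rw [blocks_iff_inter_nonempty] at hblocks
  · rw [pow_succ, pow_succ, ← card_Sw, mul_right_comm, mul_comm (2 ^ _),
      card_filter_powerset_inter_card_eq_one_mul_two_pow (fun i _ => card_le_two)
        (pairwiseDisjoint_Sw w) hblocks]
  · push Not at hblocks
    obtain ⟨i, hi, hRi⟩ := hblocks
    rw [card_filter_powerset_inter_card_eq_one_eq_zero hi hRi, mul_zero]

/-- for a cd-word `w` of degree `n`,
`Θ_w = Σ_{S ∈ b[I^w]} 2^{|S|+1} M_S = 2^{|w|_d + 1} Σ_{T, [n]\T ∈ b[I^w]} F_T`. -/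
theorem stmt_12 (n : ℕ) (w : List Bool) (hw : degw w = n) :
    ∑ S ∈ (Finset.Icc 1 n).powerset.filter (fun S => blocks w S),
        (2 : ℚ) ^ (S.card + 1) • MM S
      = (2 : ℚ) ^ (w.count true + 1) •
          ∑ T ∈ (Finset.Icc 1 n).powerset.filter
              (fun T => blocks w T ∧ blocks w (Finset.Icc 1 n \ T)), FF n T := by
  subst hw
  set A := (Icc 1 (degw w)).powerset.filter
    (fun T => blocks w T ∧ blocks w (Icc 1 (degw w) \ T))
  have hswap : ∑ T ∈ A, FF (degw w) T =
      ∑ R ∈ (Icc 1 (degw w)).powerset, #{T ∈ A | T ⊆ R} • MM R := by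
    simp only [FF, ← sum_const]
    refine sum_comm' fun T R => ?_
    simp only [A, mem_filter, mem_powerset]
    tauto
  rw [hswap, smul_sum, sum_filter]
  refine sum_congr rfl fun R hR => ?_
  have hcoeff := congrArg (Nat.cast : ℕ → ℚ)
    (two_pow_mul_card_filter_blocks_and_blocks_sdiff_subset w (mem_powerset.1 hR))
  push_cast [Nat.cast_ite] at hcoeff
  rw [← Nat.cast_smul_eq_nsmul ℚ, smul_smul, hcoeff, ite_smul, zero_smul]
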